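/- For every natural number n there exists a partition of {0,1}^n into monotone symmetric chains (the De Bruijn–Tengbergen–Kruyswijk partition). -/
import Mathlib


/-- Hamming weight of a binary string. -/
def hWt {n : ℕ} (x : Fin n → Bool) : ℕ := (Finset.univ.filter fun i => x i = true).card

/-- A monotone symmetric chain in `{0,1}^n`: a sequence `c_k, ..., c_{n-k}` with
`|c_i| = i`, consecutive elements at Hamming distance 1, and such that if `c_{i-1}, c_i`
differ in coordinate `j` and `c_i, c_{i+1}` differ in coordinate `j'`, then `j < j'`. -/
def IsMonotoneSymChain (n : ℕ) (C : Finset (Fin n → Bool)) : Prop :=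
  ∃ (k : ℕ) (c : ℕ → Fin n → Bool), 2 * k ≤ n ∧
    C = (Finset.Icc k (n - k)).image c ∧
    (∀ i ∈ Finset.Icc k (n - k), hWt (c i) = i) ∧
    (∀ i : ℕ, k ≤ i → i < n - k → hammingDist (c i) (c (i + 1)) = 1) ∧
    (∀ i : ℕ, ∀ j j' : Fin n, k < i → i < n - k →
      c (i - 1) j ≠ c i j → c i j' ≠ c (i + 1) j' → j < j')

lemma hWt_snoc {n : ℕ} (x : Fin n → Bool) (b : Bool) :
    hWt (Fin.snoc x b : Fin (n+1) → Bool) = hWt x + b.toNat := by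
  simp only [hWt, Finset.card_filter]
  rw [Fin.sum_univ_castSucc]
  simp only [Fin.snoc_castSucc, Fin.snoc_last]
  cases b <;> simp

lemma hammingDist_snoc {n : ℕ} (x y : Fin n → Bool) (b b' : Bool) :
    hammingDist (Fin.snoc x b : Fin (n+1) → Bool) (Fin.snoc y b') =
      hammingDist x y + if b = b' then 0 else 1 := by
  simp only [hammingDist, Finset.card_filter]
  rw [Fin.sum_univ_castSucc]
  simp only [Fin.snoc_castSucc, Fin.snoc_last]
  congr 1
  by_cases h : b = b' <;> simp [h]

noncomputable def chainA {n : ℕ} (C : Finset (Fin n → Bool)) : Finset (Fin (n+1) → Bool) :=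
  C.image (fun z => Fin.snoc z false) ∪
    (C.filter fun z => hWt z = C.sup hWt).image (fun z => Fin.snoc z true)

noncomputable def chainB {n : ℕ} (C : Finset (Fin n → Bool)) : Finset (Fin (n+1) → Bool) :=
  (C.filter fun z => hWt z ≠ C.sup hWt).image (fun z => Fin.snoc z true)

section
variable {n : ℕ} {C : Finset (Fin n → Bool)}

lemma sup_eq {k : ℕ} {c : ℕ → Fin n → Bool} (hk : 2 * k ≤ n)
    (hCeq : C = (Finset.Icc k (n - k)).image c)
    (hw : ∀ i ∈ Finset.Icc k (n - k), hWt (c i) = i) :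
    C.sup hWt = n - k := by
  apply le_antisymm
  · apply Finset.sup_le
    intro z hz
    rw [hCeq, Finset.mem_image] at hz
    obtain ⟨i, hi, rfl⟩ := hz
    rw [hw i hi]
    exact (Finset.mem_Icc.mp hi).2
  · have hmem : c (n - k) ∈ C := by
      rw [hCeq]
      exact Finset.mem_image_of_mem c (Finset.mem_Icc.mpr ⟨by omega, le_refl _⟩)
    calc n - k = hWt (c (n - k)) :=
          (hw _ (Finset.mem_Icc.mpr ⟨by omega, le_refl _⟩)).symm
      _ ≤ C.sup hWt := Finset.le_sup hmem

lemma chainA_isChain (hC : IsMonotoneSymChain n C) : IsMonotoneSymChain (n+1) (chainA C) := by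
  obtain ⟨k, c, hk, hCeq, hw, hd, hm⟩ := hC
  have hwt : ∀ i, k ≤ i → i ≤ n - k → hWt (c i) = i := fun i h1 h2 =>
    hw i (Finset.mem_Icc.mpr ⟨h1, h2⟩)
  have hsup : C.sup hWt = n - k := sup_eq hk hCeq hw
  have hmemC : ∀ z, z ∈ C ↔ ∃ i, (k ≤ i ∧ i ≤ n - k) ∧ c i = z := by
    intro z; rw [hCeq]; simp [Finset.mem_image, Finset.mem_Icc]
  refine ⟨k, fun i => if i ≤ n - k then Fin.snoc (c i) false else Fin.snoc (c (n - k)) true,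
    by omega, ?_, ?_, ?_, ?_⟩
  · -- image equality
    ext z'
    simp only [chainA, Finset.mem_union, Finset.mem_image, Finset.mem_filter, Finset.mem_Icc]
    constructor
    · rintro (⟨z, hz, rfl⟩ | ⟨z, ⟨hz, hwz⟩, rfl⟩)
      · obtain ⟨i, ⟨h1, h2⟩, rfl⟩ := (hmemC z).mp hz
        exact ⟨i, ⟨h1, by omega⟩, by simp [h2]⟩
      · obtain ⟨i, ⟨h1, h2⟩, rfl⟩ := (hmemC z).mp hz
        have : i = n - k := by rw [hwt i h1 h2] at hwz; omega
        subst this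
        refine ⟨n + 1 - k, ⟨by omega, le_refl _⟩, ?_⟩
        rw [if_neg (by omega)]
    · rintro ⟨i, ⟨h1, h2⟩, rfl⟩
      by_cases h : i ≤ n - k
      · rw [if_pos h]
        exact Or.inl ⟨c i, (hmemC _).mpr ⟨i, ⟨h1, h⟩, rfl⟩, rfl⟩
      · rw [if_neg h]
        refine Or.inr ⟨c (n - k), ⟨(hmemC _).mpr ⟨n - k, ⟨by omega, le_refl _⟩, rfl⟩, ?_⟩, rfl⟩
        rw [hsup, hwt (n - k) (by omega) (le_refl _)]
  · -- weights
    intro i hi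
    rw [Finset.mem_Icc] at hi
    beta_reduce
    by_cases h : i ≤ n - k
    · rw [if_pos h, hWt_snoc, hwt i hi.1 h]; simp
    · rw [if_neg h, hWt_snoc, hwt (n - k) (by omega) (le_refl _)]
      simp; omega
  · -- hamming
    intro i h1 h2
    beta_reduce
    have hi : i ≤ n - k := by omega
    rw [if_pos hi]
    by_cases h : i < n - k
    · rw [if_pos (by omega), hammingDist_snoc, hd i h1 h]; simp
    · have : i = n - k := by omega
      subst this
      rw [if_neg (by omega), hammingDist_snoc, hammingDist_self]; simp
  · -- monotone
    intro i j j' h1 h2 hj hj'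
    beta_reduce at hj hj'
    have hi : i ≤ n - k := by omega
    rw [if_pos hi, if_pos (by omega : i - 1 ≤ n - k)] at hj
    rw [if_pos hi] at hj'
    by_cases h : i < n - k
    · rw [if_pos (by omega)] at hj'
      rcases Fin.eq_castSucc_or_eq_last j with ⟨j₀, rfl⟩ | rfl
      · rcases Fin.eq_castSucc_or_eq_last j' with ⟨j₀', rfl⟩ | rfl
        · simp only [Fin.snoc_castSucc] at hj hj'
          exact Fin.castSucc_lt_castSucc_iff.mpr (hm i j₀ j₀' h1 h hj hj')
        · simp only [Fin.snoc_last] at hj'; exact absurd rfl hj'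
      · simp only [Fin.snoc_last] at hj; exact absurd rfl hj
    · rw [if_neg (by omega)] at hj'
      have hieq : i = n - k := by omega
      rcases Fin.eq_castSucc_or_eq_last j with ⟨j₀, rfl⟩ | rfl
      · rcases Fin.eq_castSucc_or_eq_last j' with ⟨j₀', rfl⟩ | rfl
        · simp only [Fin.snoc_castSucc, hieq] at hj'; exact absurd rfl hj'
        · exact Fin.castSucc_lt_last j₀
      · simp only [Fin.snoc_last] at hj; exact absurd rfl hj

lemma chainB_isChain (hC : IsMonotoneSymChain n C) (hne : (chainB C).Nonempty) :
    IsMonotoneSymChain (n+1) (chainB C) := by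
  obtain ⟨k, c, hk, hCeq, hw, hd, hm⟩ := hC
  have hwt : ∀ i, k ≤ i → i ≤ n - k → hWt (c i) = i := fun i h1 h2 =>
    hw i (Finset.mem_Icc.mpr ⟨h1, h2⟩)
  have hsup : C.sup hWt = n - k := sup_eq hk hCeq hw
  have hmemC : ∀ z, z ∈ C ↔ ∃ i, (k ≤ i ∧ i ≤ n - k) ∧ c i = z := by
    intro z; rw [hCeq]; simp [Finset.mem_image, Finset.mem_Icc]
  have hlt : k < n - k := by
    obtain ⟨z', hz'⟩ := hne
    simp only [chainB, Finset.mem_image, Finset.mem_filter] at hz'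
    obtain ⟨z, ⟨hz, hwz⟩, _⟩ := hz'
    obtain ⟨i, ⟨h1, h2⟩, rfl⟩ := (hmemC z).mp hz
    rw [hwt i h1 h2, hsup] at hwz
    omega
  refine ⟨k + 1, fun i => Fin.snoc (c (i - 1)) true, by omega, ?_, ?_, ?_, ?_⟩
  · have hsub : n + 1 - (k + 1) = n - k := by omega
    rw [hsub]
    ext z'
    simp only [chainB, Finset.mem_image, Finset.mem_filter, Finset.mem_Icc]
    constructor
    · rintro ⟨z, ⟨hz, hwz⟩, rfl⟩
      obtain ⟨i, ⟨h1, h2⟩, rfl⟩ := (hmemC z).mp hz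
      rw [hwt i h1 h2, hsup] at hwz
      exact ⟨i + 1, ⟨by omega, by omega⟩, by simp⟩
    · rintro ⟨i, ⟨h1, h2⟩, rfl⟩
      refine ⟨c (i - 1), ⟨(hmemC _).mpr ⟨i - 1, ⟨by omega, by omega⟩, rfl⟩, ?_⟩, rfl⟩
      rw [hwt (i - 1) (by omega) (by omega), hsup]
      omega
  · intro i hi
    rw [Finset.mem_Icc] at hi
    have hsub : n + 1 - (k + 1) = n - k := by omega
    rw [hsub] at hi
    rw [hWt_snoc, hwt (i - 1) (by omega) (by omega)]
    simp; omega
  · intro i h1 h2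
    have hsub : n + 1 - (k + 1) = n - k := by omega
    rw [hsub] at h2
    rw [hammingDist_snoc]
    have he : i + 1 - 1 = (i - 1) + 1 := by omega
    rw [he, hd (i - 1) (by omega) (by omega)]
    simp
  · intro i j j' h1 h2 hj hj'
    have hsub : n + 1 - (k + 1) = n - k := by omega
    rw [hsub] at h2
    rcases Fin.eq_castSucc_or_eq_last j with ⟨j₀, rfl⟩ | rfl
    · rcases Fin.eq_castSucc_or_eq_last j' with ⟨j₀', rfl⟩ | rfl
      · simp only [Fin.snoc_castSucc] at hj hj'
        refine Fin.castSucc_lt_castSucc_iff.mpr (hm (i - 1) j₀ j₀' (by omega) (by omega) hj ?_)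
        have e : i - 1 + 1 = i + 1 - 1 := by omega
        rw [e]
        exact hj'
      · simp only [Fin.snoc_last] at hj'; exact absurd rfl hj'
    · simp only [Fin.snoc_last] at hj; exact absurd rfl hj

end

/-- For every `n` there exists a partition of `{0,1}^n` into monotone symmetric chains
(the De Bruijn–Tengbergen–Kruyswijk partition). -/
theorem exists_monotone_symChain_partition (n : ℕ) :
    ∃ P : Finset (Finset (Fin n → Bool)),
      (∀ C ∈ P, IsMonotoneSymChain n C) ∧
      ∀ x : Fin n → Bool, ∃! C, C ∈ P ∧ x ∈ C := by
  induction n with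
  | zero =>
    refine ⟨{Finset.univ}, ?_, ?_⟩
    · intro C hC
      rw [Finset.mem_singleton] at hC; subst hC
      refine ⟨0, fun _ => fun i => i.elim0, by omega, ?_, ?_, ?_, ?_⟩
      · ext z
        simp only [Finset.mem_univ, true_iff, Finset.mem_image, Finset.mem_Icc]
        exact ⟨0, by simp, funext fun i => i.elim0⟩
      · intro i hi
        simp only [Finset.mem_Icc, Nat.zero_sub, Nat.le_zero] at hi
        simp [hWt, hi.2]
      · intro i _ h2; omega
      · intro i _ _ _ h2; omega
    · intro x
      exact ⟨Finset.univ, ⟨Finset.mem_singleton_self _, Finset.mem_univ _⟩,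
        fun D hD => Finset.mem_singleton.mp hD.1⟩
  | succ n ih =>
    obtain ⟨P, hP, hPu⟩ := ih
    refine ⟨(P.biUnion fun C => {chainA C, chainB C}).filter (·.Nonempty), ?_, ?_⟩
    · intro D hD
      rw [Finset.mem_filter] at hD
      obtain ⟨hD1, hDne⟩ := hD
      rw [Finset.mem_biUnion] at hD1
      obtain ⟨C, hC, hmem⟩ := hD1
      simp only [Finset.mem_insert, Finset.mem_singleton] at hmem
      rcases hmem with rfl | rfl
      · exact chainA_isChain (hP C hC)
      · exact chainB_isChain (hP C hC) hDne
    · intro x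
      have hx : Fin.snoc (Fin.init x) (x (Fin.last n)) = x := Fin.snoc_init_self x
      obtain ⟨C, ⟨hCP, hyC⟩, hCuniq⟩ := hPu (Fin.init x)
      have hxA_false : x (Fin.last n) = false → x ∈ chainA C := by
        intro hb
        rw [← hx, hb]
        exact Finset.mem_union_left _ (Finset.mem_image_of_mem _ hyC)
      have hxA_true : x (Fin.last n) = true → hWt (Fin.init x) = C.sup hWt →
          x ∈ chainA C := by
        intro hb hw
        rw [← hx, hb]
        exact Finset.mem_union_right _
          (Finset.mem_image_of_mem _ (Finset.mem_filter.mpr ⟨hyC, hw⟩))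
      have hxB : x (Fin.last n) = true → hWt (Fin.init x) ≠ C.sup hWt →
          x ∈ chainB C := by
        intro hb hw
        rw [← hx, hb]
        exact Finset.mem_image_of_mem _ (Finset.mem_filter.mpr ⟨hyC, hw⟩)
      have hAmem : chainA C ∈ P.biUnion fun C => {chainA C, chainB C} :=
        Finset.mem_biUnion.mpr ⟨C, hCP, Finset.mem_insert_self _ _⟩
      have hBmem : chainB C ∈ P.biUnion fun C => {chainA C, chainB C} :=
        Finset.mem_biUnion.mpr ⟨C, hCP, Finset.mem_insert_of_mem (Finset.mem_singleton_self _)⟩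
      have key : ∀ D, D ∈ (P.biUnion fun C => {chainA C, chainB C}).filter (·.Nonempty) →
          x ∈ D →
          D = (if x (Fin.last n) = true ∧ hWt (Fin.init x) ≠ C.sup hWt then chainB C
               else chainA C) := by
        intro D hD hxD
        rw [Finset.mem_filter, Finset.mem_biUnion] at hD
        obtain ⟨⟨C', hC', hmem⟩, _⟩ := hD
        simp only [Finset.mem_insert, Finset.mem_singleton] at hmem
        rcases hmem with rfl | rfl
        · rcases Finset.mem_union.mp hxD with h | h
          · obtain ⟨z, hz, hzx⟩ := Finset.mem_image.mp h
            have hb : x (Fin.last n) = false := by rw [← hzx]; simp [Fin.snoc_last]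
            have hyz : Fin.init x = z := by rw [← hzx, Fin.init_snoc]
            have hCC : C' = C := hCuniq C' ⟨hC', hyz ▸ hz⟩
            subst hCC
            rw [if_neg (by simp [hb])]
          · obtain ⟨z, hz, hzx⟩ := Finset.mem_image.mp h
            rw [Finset.mem_filter] at hz
            have hyz : Fin.init x = z := by rw [← hzx, Fin.init_snoc]
            have hCC : C' = C := hCuniq C' ⟨hC', hyz ▸ hz.1⟩
            subst hCC
            rw [if_neg (fun h => h.2 (hyz ▸ hz.2))]
        · obtain ⟨z, hz, hzx⟩ := Finset.mem_image.mp hxD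
          rw [Finset.mem_filter] at hz
          have hb : x (Fin.last n) = true := by rw [← hzx]; simp [Fin.snoc_last]
          have hyz : Fin.init x = z := by rw [← hzx, Fin.init_snoc]
          have hCC : C' = C := hCuniq C' ⟨hC', hyz ▸ hz.1⟩
          subst hCC
          rw [if_pos ⟨hb, hyz ▸ hz.2⟩]
      refine ⟨(if x (Fin.last n) = true ∧ hWt (Fin.init x) ≠ C.sup hWt then chainB C
               else chainA C), ⟨?_, ?_⟩, fun D hD => key D hD.1 hD.2⟩
      · by_cases h : x (Fin.last n) = true ∧ hWt (Fin.init x) ≠ C.sup hWt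
        · rw [if_pos h]
          exact Finset.mem_filter.mpr ⟨hBmem, ⟨x, hxB h.1 h.2⟩⟩
        · rw [if_neg h]
          refine Finset.mem_filter.mpr ⟨hAmem, ⟨x, ?_⟩⟩
          rcases Bool.eq_false_or_eq_true (x (Fin.last n)) with hb | hb
          · push_neg at h
            exact hxA_true hb (h hb)
          · exact hxA_false hb
      · by_cases h : x (Fin.last n) = true ∧ hWt (Fin.init x) ≠ C.sup hWt
        · rw [if_pos h]; exact hxB h.1 h.2
        · rw [if_neg h]
          rcases Bool.eq_false_or_eq_true (x (Fin.last n)) with hb | hb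
          · push_neg at h
            exact hxA_true hb (h hb)
          · exact hxA_false hb
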